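/- Let (a_n) be an arithmetic sequence and let x ∈ T be such that supp(x) is co-finite in ℕ. If d̄(L(supp(x) \ supp_q(x))) > 0, then x ∉ t^s_{(d_n)}(T). -/

import Mathlib

open Filter Topology Set

noncomputable section

/-- The sequence of ratios `b n = a n / a (n-1)` of an arithmetic sequence. -/
def ratios (a : ℕ → ℕ) (n : ℕ) : ℕ := a n / a (n - 1)

/-- An arithmetic sequence: `a 0 = 1`, strictly increasing, each term divides the next. -/
def IsArithSeq (a : ℕ → ℕ) : Prop :=
  a 0 = 1 ∧ (∀ n, a n < a (n + 1)) ∧ (∀ n, a n ∣ a (n + 1))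

/-- The indices `n_k` with `a k = d (n k)`: `n 0 = 1`, `n (k+1) = n k + (b (k+1) - 1)`. -/
def nseq (a : ℕ → ℕ) : ℕ → ℕ
  | 0 => 1
  | k + 1 => nseq a k + (ratios a (k + 1) - 1)

/-- The lifting function `L(A) = ⋃_{k ∈ A} [n_{k-1}, n_k - 1]`. -/
def liftSet (a : ℕ → ℕ) (A : Set ℕ) : Set ℕ :=
  ⋃ k ∈ A, Set.Icc (nseq a (k - 1)) (nseq a k - 1)

/-- `A ⊆ ℕ` has natural density `δ`. -/
def HasDensity (A : Set ℕ) (δ : ℝ) : Prop :=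
  Tendsto (fun n : ℕ => ((A ∩ Set.Iio n).ncard : ℝ) / n) atTop (𝓝 δ)

/-- The upper natural density of `A ⊆ ℕ`. -/
def upperDensity (A : Set ℕ) : ℝ :=
  limsup (fun n : ℕ => ((A ∩ Set.Iio n).ncard : ℝ) / n) atTop

/-- The sequence `(d n)`: the increasing enumeration of `{r * a k : k ≥ 0, 1 ≤ r < b (k+1)}`. -/
def dSeq (a : ℕ → ℕ) : ℕ → ℕ :=
  Nat.nth (fun m => ∃ k r : ℕ, 1 ≤ r ∧ r < ratios a (k + 1) ∧ m = r * a k)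

/-- The characterized subgroup `t_{(u n)}(𝕋)`. -/
def charSub (u : ℕ → ℤ) : Set (AddCircle (1 : ℝ)) :=
  {x | Tendsto (fun n => u n • x) atTop (𝓝 0)}

/-- The statistically characterized subgroup `t^s_{(u n)}(𝕋)`. -/
def statChar (u : ℕ → ℤ) : Set (AddCircle (1 : ℝ)) :=
  {x | ∀ ε : ℝ, 0 < ε → HasDensity {n : ℕ | ε ≤ ‖u n • x‖} 0}

/-- Density lifting invariant. -/
def Dli (a : ℕ → ℕ) : Prop :=
  ∀ A : Set ℕ, A.Infinite → HasDensity A 0 → HasDensity (liftSet a A) 0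

/-- Weakly density lifting invariant. -/
def WeaklyDli (a : ℕ → ℕ) : Prop :=
  ∃ A : Set ℕ, A.Infinite ∧ ∀ m : ℕ, HasDensity (liftSet a ((fun x => x - m) '' A)) 0

/-- Strongly non density lifting invariant. -/
def StronglyNonDli (a : ℕ → ℕ) : Prop :=
  ∀ A : Set ℕ, A.Infinite → 0 < upperDensity (liftSet a A)

/-! If `K + 1 ∈ supp x \ supp_q x`, the digit `c (K + 1)` lies in `[1, b - 2]` for
`b = b (K + 1)`, so `θ = a K • x` satisfies `1 / b ≤ ‖θ‖`. The terms of `(d n)` with index in the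
block `[n K, n (K + 1))` are the multiples `r * a K`, `2 ≤ r ≤ b`, and for such `θ` at least a
sixteenth of the points `r • θ` have norm `≥ 1 / 16`: some `t ≤ b / 8 + 1` has `‖t • θ‖ ≥ 1 / 8`,
and then one of `r • θ`, `(r + t) • θ` is large. So each block of `L(supp x \ supp_q x)` carries a
proportion `1 / 16` of indices with `‖d n • x‖ ≥ 1 / 16`; since this set is a union of whole
blocks, statistical convergence of `d n • x` would force it to have density zero. -/

namespace AddCircle

lemma le_norm_coe_of_mem_Icc {z ε : ℝ} (h₁ : ε ≤ z) (h₂ : z ≤ 1 - ε) :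
    ε ≤ ‖(z : AddCircle (1 : ℝ))‖ := by
  rcases le_or_gt ε 0 with hε | hε
  · exact hε.trans (norm_nonneg _)
  rw [UnitAddCircle.norm_eq]
  rcases le_or_gt (round z) 0 with h | h
  · have : (round z : ℝ) ≤ 0 := by exact_mod_cast h
    rw [abs_of_nonneg (by linarith)]
    linarith
  · have : (1 : ℝ) ≤ round z := by exact_mod_cast h
    rw [abs_of_nonpos (by linarith)]
    linarith

lemma exists_coe_eq_or_coe_eq_neg (θ : AddCircle (1 : ℝ)) :
    ∃ y : ℝ, ((y : AddCircle (1 : ℝ)) = θ ∨ (y : AddCircle (1 : ℝ)) = -θ) ∧ y = ‖θ‖ := by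
  obtain ⟨x, rfl⟩ := QuotientAddGroup.mk_surjective θ
  have hx : ((x - round x : ℝ) : AddCircle (1 : ℝ)) = x := by
    rw [coe_sub, sub_eq_self, coe_eq_zero_iff]
    exact ⟨round x, by simp⟩
  refine ⟨|x - round x|, ?_, UnitAddCircle.norm_eq.symm⟩
  rcases abs_choice (x - round x) with h | h <;> rw [h]
  · exact Or.inl hx
  · exact Or.inr (by rw [coe_neg, hx])

lemma sub_one_le_two_mul_card_filter_add (θ : AddCircle (1 : ℝ)) {ε : ℝ} {t : ℕ}
    (ht : 2 * ε ≤ ‖t • θ‖) (b : ℕ) :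
    b - 1 ≤ 2 * ((Finset.Icc 2 b).filter fun r => ε ≤ ‖r • θ‖).card + t := by
  classical
  set good := (Finset.Icc 2 b).filter fun r => ε ≤ ‖r • θ‖
  set bad := (Finset.Icc 2 b).filter fun r => ¬ε ≤ ‖r • θ‖
  -- a small `r • θ` is followed by a large `(r + t) • θ`, unless `r + t` leaves the range
  have hbad : bad ⊆ good.image (· - t) ∪ Finset.Ioc (b - t) b := by
    intro r hr
    simp only [bad, Finset.mem_filter, Finset.mem_Icc, not_le] at hr
    rcases le_or_gt (r + t) b with hrt | hrt
    · refine Finset.mem_union_left _ (Finset.mem_image.2 ⟨r + t, ?_, by simp⟩)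
      refine Finset.mem_filter.2 ⟨Finset.mem_Icc.2 ⟨by omega, hrt⟩, ?_⟩
      have : ‖t • θ‖ ≤ ‖(r + t) • θ‖ + ‖r • θ‖ := by
        simpa [add_nsmul] using norm_sub_le ((r + t) • θ) (r • θ)
      linarith
    · exact Finset.mem_union_right _ (Finset.mem_Ioc.2 ⟨by omega, hr.1.2⟩)
  have hsplit : good.card + bad.card = b - 1 := by
    rw [Finset.card_filter_add_card_filter_not, Nat.card_Icc]
    omega
  have := (Finset.card_le_card hbad).trans <| (Finset.card_union_le _ _).trans <|
    add_le_add Finset.card_image_le (Nat.card_Ioc _ _).le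
  omega

lemma exists_nsmul_norm_ge {b : ℕ} (hb : 0 < b) {y : ℝ} (hy₁ : 1 / b ≤ y) (hy₂ : y ≤ 1 / 2) :
    ∃ t : ℕ, 8 * (t : ℝ) < b + 8 ∧ 1 / 8 ≤ ‖t • (y : AddCircle (1 : ℝ))‖ := by
  have hy : 0 < y := lt_of_lt_of_le (by positivity) hy₁
  have hyb : y⁻¹ ≤ b := by
    rw [inv_le_comm₀ hy (by positivity)]
    simpa using hy₁
  set t := ⌈(8 * y)⁻¹⌉₊
  have ht₁ : (8 * y)⁻¹ ≤ t := Nat.le_ceil _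
  have ht₂ : (t : ℝ) < (8 * y)⁻¹ + 1 := Nat.ceil_lt_add_one (by positivity)
  have hty₁ : 1 / 8 ≤ t * y := by
    rw [inv_le_iff_one_le_mul₀ (by positivity)] at ht₁
    linarith
  have hty₂ : t * y < 1 / 8 + y := by
    have := mul_lt_mul_of_pos_right ht₂ hy
    rw [add_mul, one_mul, mul_inv, mul_assoc, inv_mul_cancel₀ hy.ne', mul_one] at this
    linarith
  refine ⟨t, ?_, ?_⟩
  · have : (8 * y)⁻¹ = y⁻¹ / 8 := by rw [mul_inv]; ring
    linarith
  · rw [← coe_nsmul, nsmul_eq_mul]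
    exact le_norm_coe_of_mem_Icc hty₁ (by linarith)

lemma sub_one_le_sixteen_mul_card_filter {b : ℕ} (hb : 3 ≤ b) {θ : AddCircle (1 : ℝ)}
    (hθ : 1 / b ≤ ‖θ‖) :
    (b : ℝ) - 1 ≤ 16 * ((Finset.Icc 2 b).filter fun r => 1 / 16 ≤ ‖r • θ‖).card := by
  obtain ⟨y, hyθ, hy⟩ := exists_coe_eq_or_coe_eq_neg θ
  obtain ⟨t, ht, hyt⟩ := exists_nsmul_norm_ge (by omega) (hy ▸ hθ)
    (by simpa [hy] using norm_le_half_period 1 (x := θ) one_ne_zero)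
  have htθ : 1 / 8 ≤ ‖t • θ‖ := by rcases hyθ with h | h <;> simpa [h] using hyt
  have hcard := sub_one_le_two_mul_card_filter_add θ (ε := 1 / 16) (t := t) (by linarith) b
  have hb' : (3 : ℝ) ≤ b := by exact_mod_cast hb
  have := (Nat.cast_le (α := ℝ)).2 hcard
  push_cast [show 1 ≤ b by omega] at this
  linarith

end AddCircle

namespace IsArithSeq

variable {a : ℕ → ℕ}

lemma pos (ha : IsArithSeq a) (n : ℕ) : 0 < a n := by
  induction n with
  | zero => simp [ha.1]
  | succ k ih => exact ih.trans (ha.2.1 k)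

lemma mul_ratios (ha : IsArithSeq a) (n : ℕ) : a n * ratios a (n + 1) = a (n + 1) :=
  Nat.mul_div_cancel' (ha.2.2 n)

lemma two_le_ratios (ha : IsArithSeq a) (n : ℕ) : 2 ≤ ratios a (n + 1) := by
  by_contra! hlt
  have hle := Nat.mul_le_mul_left (a n) (show ratios a (n + 1) ≤ 1 by omega)
  rw [ha.mul_ratios n] at hle
  have := ha.2.1 n
  omega

lemma strictMono (ha : IsArithSeq a) : StrictMono a :=
  strictMono_nat_of_lt_succ ha.2.1

lemma dvd_of_le (ha : IsArithSeq a) {m n : ℕ} (h : m ≤ n) : a m ∣ a n :=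
  Nat.rel_of_forall_rel_succ_of_le (· ∣ ·) ha.2.2 h

end IsArithSeq

section Digits

variable {a c : ℕ → ℕ}

def digitTail (a c : ℕ → ℕ) (K : ℕ) : ℝ :=
  a K * ∑' n, (c (n + (K + 1)) : ℝ) / a (n + (K + 1))

lemma digit_div_le (ha : IsArithSeq a) (hc : ∀ n, 1 ≤ n → c n ≤ ratios a n - 1) (n : ℕ) :
    (c (n + 1) : ℝ) / a (n + 1) ≤ 1 / a n - 1 / a (n + 1) := by
  have hb := ha.two_le_ratios n
  have hcb : (c (n + 1) : ℝ) ≤ ratios a (n + 1) - 1 := by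
    have := hc (n + 1) n.succ_pos
    have : ((c (n + 1) + 1 : ℕ) : ℝ) ≤ ratios a (n + 1) := by exact_mod_cast (by omega)
    push_cast at this
    linarith
  have ha₀ : (0 : ℝ) < a n := by exact_mod_cast ha.pos n
  rw [← ha.mul_ratios n, Nat.cast_mul, div_le_iff₀ (by positivity), sub_mul,
    one_div_mul_cancel (by positivity)]
  field_simp
  linarith

lemma sum_range_digits_le (ha : IsArithSeq a) (hc : ∀ n, 1 ≤ n → c n ≤ ratios a n - 1)
    (K m : ℕ) : ∑ i ∈ Finset.range m, (c (i + (K + 1)) : ℝ) / a (i + (K + 1)) ≤ 1 / a K := by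
  calc ∑ i ∈ Finset.range m, (c (i + (K + 1)) : ℝ) / a (i + (K + 1))
      ≤ ∑ i ∈ Finset.range m, (1 / (a (K + i) : ℝ) - 1 / a (K + (i + 1))) :=
        Finset.sum_le_sum fun i _ => by
          simpa only [add_comm, add_left_comm, add_assoc] using digit_div_le ha hc (K + i)
    _ = 1 / a K - 1 / a (K + m) := Finset.sum_range_sub' (fun i => 1 / (a (K + i) : ℝ)) m
    _ ≤ 1 / a K := by linarith [(by positivity : (0 : ℝ) ≤ 1 / a (K + m))]

lemma summable_digits (ha : IsArithSeq a) (hc : ∀ n, 1 ≤ n → c n ≤ ratios a n - 1) :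
    Summable fun n => (c n : ℝ) / a n :=
  (summable_nat_add_iff 1).1 <|
    summable_of_sum_range_le (fun _ => by positivity) (sum_range_digits_le ha hc 0)

lemma digitTail_nonneg (K : ℕ) : 0 ≤ digitTail a c K :=
  mul_nonneg (Nat.cast_nonneg _) (tsum_nonneg fun _ => by positivity)

lemma digitTail_le_one (ha : IsArithSeq a) (hc : ∀ n, 1 ≤ n → c n ≤ ratios a n - 1) (K : ℕ) :
    digitTail a c K ≤ 1 := by
  have ha₀ : (0 : ℝ) < a K := by exact_mod_cast ha.pos K
  calc digitTail a c K ≤ a K * (1 / a K) :=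
        mul_le_mul_of_nonneg_left (Real.tsum_le_of_sum_range_le (fun _ => by positivity)
          (sum_range_digits_le ha hc K)) ha₀.le
    _ = 1 := by field_simp

lemma digitTail_eq (ha : IsArithSeq a) (hc : ∀ n, 1 ≤ n → c n ≤ ratios a n - 1) (K : ℕ) :
    digitTail a c K = (c (K + 1) + digitTail a c (K + 1)) / ratios a (K + 1) := by
  have hs := (summable_nat_add_iff (K + 1)).2 (summable_digits ha hc)
  have ha₀ : (0 : ℝ) < a K := by exact_mod_cast ha.pos K
  have hb : (0 : ℝ) < ratios a (K + 1) := by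
    exact_mod_cast (show 0 < ratios a (K + 1) by have := ha.two_le_ratios K; omega)
  have hmul : (a (K + 1) : ℝ) = a K * ratios a (K + 1) := by exact_mod_cast (ha.mul_ratios K).symm
  simp only [digitTail]
  rw [hs.tsum_eq_zero_add]
  simp only [zero_add, show ∀ n, n + 1 + (K + 1) = n + (K + 1 + 1) from fun n => by ring]
  rw [hmul]
  field_simp

lemma nsmul_coe_tsum_digits (ha : IsArithSeq a) (hc : ∀ n, 1 ≤ n → c n ≤ ratios a n - 1)
    (K : ℕ) : a K • ((∑' n, (c n : ℝ) / a n : ℝ) : AddCircle (1 : ℝ)) = digitTail a c K := by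
  unfold digitTail
  rw [← AddCircle.coe_nsmul, nsmul_eq_mul, ← (summable_digits ha hc).sum_add_tsum_nat_add (K + 1),
    mul_add, AddCircle.coe_add, add_eq_right]
  have hint : (a K : ℝ) * ∑ i ∈ Finset.range (K + 1), (c i : ℝ) / a i
      = ((∑ i ∈ Finset.range (K + 1), c i * (a K / a i) : ℕ) : ℝ) := by
    rw [Nat.cast_sum, Finset.mul_sum]
    refine Finset.sum_congr rfl fun i hi => ?_
    have hdvd := ha.dvd_of_le (Nat.lt_succ_iff.1 (Finset.mem_range.1 hi))
    rw [Nat.cast_mul, Nat.cast_div hdvd (by exact_mod_cast (ha.pos i).ne')]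
    field_simp
  rw [hint, AddCircle.coe_eq_zero_iff]
  exact ⟨(∑ i ∈ Finset.range (K + 1), c i * (a K / a i) : ℕ), by rw [zsmul_one, Int.cast_natCast]⟩

lemma inv_ratios_le_norm_nsmul (ha : IsArithSeq a) (hc : ∀ n, 1 ≤ n → c n ≤ ratios a n - 1)
    {K : ℕ} (h₁ : 1 ≤ c (K + 1)) (h₂ : c (K + 1) + 2 ≤ ratios a (K + 1)) :
    1 / ratios a (K + 1) ≤ ‖a K • ((∑' n, (c n : ℝ) / a n : ℝ) : AddCircle (1 : ℝ))‖ := by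
  rw [nsmul_coe_tsum_digits ha hc]
  have hb : (0 : ℝ) < ratios a (K + 1) := by exact_mod_cast (show 0 < ratios a (K + 1) by omega)
  have h₁' : (1 : ℝ) ≤ c (K + 1) := by exact_mod_cast h₁
  have h₂' : (c (K + 1) : ℝ) + 2 ≤ ratios a (K + 1) := by exact_mod_cast h₂
  have := digitTail_nonneg (a := a) (c := c) (K + 1)
  have := digitTail_le_one ha hc (K + 1)
  apply AddCircle.le_norm_coe_of_mem_Icc <;> rw [digitTail_eq ha hc K]
  · gcongr
    linarith
  · rw [div_le_iff₀ hb, sub_mul, one_div_mul_cancel hb.ne']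
    linarith

end Digits

section Enumeration

variable {a : ℕ → ℕ}

lemma one_le_nseq (k : ℕ) : 1 ≤ nseq a k := by
  induction k with
  | zero => rfl
  | succ k ih => exact ih.trans (Nat.le_add_right _ _)

lemma IsArithSeq.nseq_strictMono (ha : IsArithSeq a) : StrictMono (nseq a) :=
  strictMono_nat_of_lt_succ fun k => by
    have := ha.two_le_ratios k
    simp only [nseq]
    omega

def IsDTerm (a : ℕ → ℕ) (m : ℕ) : Prop :=
  ∃ k r : ℕ, 1 ≤ r ∧ r < ratios a (k + 1) ∧ m = r * a k

lemma IsArithSeq.isDTerm_mul (ha : IsArithSeq a) {k r : ℕ} (h₁ : 1 ≤ r)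
    (h₂ : r ≤ ratios a (k + 1)) : IsDTerm a (r * a k) := by
  rcases h₂.lt_or_eq with h₂ | rfl
  · exact ⟨k, r, h₁, h₂, rfl⟩
  · refine ⟨k + 1, 1, le_rfl, ha.two_le_ratios (k + 1), ?_⟩
    rw [one_mul, mul_comm, ha.mul_ratios]

lemma IsArithSeq.mem_Ico_of_isDTerm (ha : IsArithSeq a) {m : ℕ} (hm : IsDTerm a m) :
    ∃ k r, m = r * a k ∧ a k ≤ m ∧ m < a (k + 1) := by
  obtain ⟨k, r, h₁, h₂, rfl⟩ := hm
  refine ⟨k, r, rfl, Nat.le_mul_of_pos_left _ h₁, ?_⟩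
  rw [← ha.mul_ratios, mul_comm (a k)]
  exact Nat.mul_lt_mul_of_pos_right h₂ (ha.pos k)

lemma IsArithSeq.eq_of_isDTerm (ha : IsArithSeq a) {k r m : ℕ} (hm : IsDTerm a m) (hr : 1 ≤ r)
    (hrb : r < ratios a (k + 1)) (h₁ : r * a k ≤ m) (h₂ : m < (r + 1) * a k) : m = r * a k := by
  obtain ⟨k', r', rfl, hk'₁, hk'₂⟩ := ha.mem_Ico_of_isDTerm hm
  have hlt : (r + 1) * a k ≤ a (k + 1) := by
    rw [← ha.mul_ratios, mul_comm]
    exact Nat.mul_le_mul_left _ hrb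
  have hk : k' = k := by
    have h₃ : k' < k + 1 := ha.strictMono.lt_iff_lt.1 (by nlinarith)
    have h₄ : k < k' + 1 := ha.strictMono.lt_iff_lt.1 (by nlinarith)
    omega
  subst hk
  have hr₁ : r' < r + 1 := lt_of_mul_lt_mul_right h₂ (Nat.zero_le _)
  have hr₂ : r ≤ r' := le_of_mul_le_mul_right h₁ (ha.pos k')
  rw [show r' = r by omega]

lemma Nat.count_eq_succ_of_forall_not {p : ℕ → Prop} [DecidablePred p] {m n : ℕ} (hmn : m < n)
    (hm : p m) (h : ∀ k, m < k → k < n → ¬p k) : Nat.count p n = Nat.count p m + 1 := by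
  obtain ⟨j, rfl⟩ := Nat.exists_eq_add_of_lt hmn
  rw [add_right_comm, Nat.count_add, Nat.count_succ_eq_succ_count_iff.2 hm, add_eq_left,
    Nat.count_iff_forall_not]
  exact fun i hi => h _ (by omega) (by omega)

open scoped Classical in
lemma IsArithSeq.count_isDTerm_mul (ha : IsArithSeq a) {k : ℕ}
    (hk : Nat.count (IsDTerm a) (a k) = nseq a k - 1) :
    ∀ r, 1 ≤ r → r ≤ ratios a (k + 1) → Nat.count (IsDTerm a) (r * a k) = nseq a k + r - 2 := by
  have := one_le_nseq (a := a) k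
  intro r
  induction r with
  | zero => omega
  | succ r ih =>
    intro _ hr
    rcases Nat.eq_zero_or_pos r with rfl | hr₀
    · rw [zero_add, one_mul, hk]
      omega
    rw [Nat.count_eq_succ_of_forall_not (m := r * a k), ih hr₀ (by omega)]
    · omega
    · exact Nat.mul_lt_mul_of_pos_right (by omega) (ha.pos k)
    · exact ha.isDTerm_mul hr₀ (by omega)
    · exact fun m hm₁ hm₂ hm => hm₁.ne' (ha.eq_of_isDTerm hm hr₀ (by omega) hm₁.le hm₂)

open scoped Classical in
lemma IsArithSeq.count_isDTerm (ha : IsArithSeq a) (k : ℕ) :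
    Nat.count (IsDTerm a) (a k) = nseq a k - 1 := by
  induction k with
  | zero =>
    rw [ha.1, Nat.count_one, if_neg]
    · rfl
    · rintro ⟨k, r, hr, -, hm⟩
      have := Nat.mul_pos hr (ha.pos k)
      omega
  | succ k ih =>
    have := ha.two_le_ratios k
    rw [← ha.mul_ratios, mul_comm, ha.count_isDTerm_mul ih _ (by omega) le_rfl]
    simp only [nseq]
    omega

lemma IsArithSeq.dSeq_nseq_add (ha : IsArithSeq a) {k r : ℕ} (h₁ : 1 ≤ r)
    (h₂ : r ≤ ratios a (k + 1)) : dSeq a (nseq a k + r - 2) = r * a k := by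
  classical
  rw [← ha.count_isDTerm_mul (ha.count_isDTerm k) r h₁ h₂]
  exact Nat.nth_count (ha.isDTerm_mul h₁ h₂)

end Enumeration

section Density

def blockUnion (n : ℕ → ℕ) (I : Set ℕ) : Set ℕ :=
  ⋃ K ∈ I, Ico (n K) (n (K + 1))

variable {n : ℕ → ℕ} {I : Set ℕ}

lemma ncard_inter_Iio_add_ncard_inter_Ico (X : Set ℕ) {N₁ N₂ : ℕ} (h : N₁ ≤ N₂) :
    (X ∩ Iio N₁).ncard + (X ∩ Ico N₁ N₂).ncard = (X ∩ Iio N₂).ncard := by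
  rw [← Set.ncard_union_eq _ ((finite_Iio _).inter_of_right _) ((finite_Ico _ _).inter_of_right _),
    ← inter_union_distrib_left, Iio_union_Ico_eq_Iio h]
  exact disjoint_left.2 fun m hm₁ hm₂ => (not_lt.2 hm₂.2.1) hm₁.2

lemma mem_blockUnion_iff (hn : StrictMono n) {K m : ℕ} (hm : m ∈ Ico (n K) (n (K + 1))) :
    m ∈ blockUnion n I ↔ K ∈ I := by
  simp only [blockUnion, mem_iUnion, exists_prop]
  refine ⟨fun ⟨j, hj, hmj⟩ => ?_, fun hK => ⟨K, hK, hm⟩⟩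
  have h₁ : j < K + 1 := hn.lt_iff_lt.1 (hmj.1.trans_lt hm.2)
  have h₂ : K < j + 1 := hn.lt_iff_lt.1 (hm.1.trans_lt hmj.2)
  rwa [show K = j by omega]

lemma blockUnion_inter_Iio_zero (hn : StrictMono n) : blockUnion n I ∩ Iio (n 0) = ∅ := by
  simp only [blockUnion, eq_empty_iff_forall_notMem, mem_inter_iff, mem_iUnion, mem_Iio]
  rintro m ⟨⟨K, -, hm, -⟩, hm₀⟩
  exact (hm.trans_lt hm₀).not_ge (hn.monotone K.zero_le)

lemma ncard_blockUnion_inter_Iio_of_mem (hn : StrictMono n) {K N : ℕ} (hK : K ∈ I)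
    (h₁ : n K ≤ N) (h₂ : N ≤ n (K + 1)) :
    (blockUnion n I ∩ Iio N).ncard = (blockUnion n I ∩ Iio (n K)).ncard + (N - n K) := by
  have hsub : Ico (n K) N ⊆ blockUnion n I :=
    fun m hm => (mem_blockUnion_iff hn ⟨hm.1, hm.2.trans_le h₂⟩).2 hK
  rw [← ncard_inter_Iio_add_ncard_inter_Ico _ h₁, inter_eq_right.2 hsub, Set.ncard_Ico_nat]

lemma ncard_blockUnion_inter_Iio_of_notMem (hn : StrictMono n) {K N : ℕ} (hK : K ∉ I)
    (h₁ : n K ≤ N) (h₂ : N ≤ n (K + 1)) :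
    (blockUnion n I ∩ Iio N).ncard = (blockUnion n I ∩ Iio (n K)).ncard := by
  rw [← ncard_inter_Iio_add_ncard_inter_Ico _ h₁, add_eq_left, ncard_eq_zero,
    eq_empty_iff_forall_notMem]
  exact fun m hm => hK ((mem_blockUnion_iff hn ⟨hm.2.1, hm.2.2.trans_le h₂⟩).1 hm.1)

lemma ncard_inter_Iio_le (X : Set ℕ) (N : ℕ) : (X ∩ Iio N).ncard ≤ N :=
  (ncard_le_ncard inter_subset_right (finite_Iio N)).trans (ncard_Iio_nat N).le

lemma add_div_add_le_add_div_add {c m j j' : ℝ} (hc : 0 ≤ c) (hcm : c ≤ m) (hj : 0 ≤ j)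
    (hjj' : j ≤ j') : (c + j) / (m + j) ≤ (c + j') / (m + j') := by
  rcases (by linarith : 0 ≤ m + j).eq_or_lt with h | h
  · rw [← h, div_zero]
    exact div_nonneg (by linarith) (by linarith)
  · rw [div_le_div_iff₀ h (by linarith)]
    nlinarith

lemma ncard_blockUnion_inter_Iio_le (hn : StrictMono n) {S : Set ℕ} {C : ℝ} (hC : 0 ≤ C)
    (hS : ∀ K ∈ I, ((n (K + 1) - n K : ℕ) : ℝ) ≤ C * (S ∩ Ico (n K) (n (K + 1))).ncard)
    (K : ℕ) : ((blockUnion n I ∩ Iio (n K)).ncard : ℝ) ≤ C * (S ∩ Iio (n K)).ncard := by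
  induction K with
  | zero =>
    rw [blockUnion_inter_Iio_zero hn, ncard_empty, Nat.cast_zero]
    positivity
  | succ K ih =>
    have hle := (hn K.lt_succ_self).le
    rw [← ncard_inter_Iio_add_ncard_inter_Ico S hle, Nat.cast_add, mul_add]
    by_cases hK : K ∈ I
    · rw [ncard_blockUnion_inter_Iio_of_mem hn hK hle le_rfl, Nat.cast_add]
      linarith [hS K hK]
    · rw [ncard_blockUnion_inter_Iio_of_notMem hn hK hle le_rfl]
      have : 0 ≤ C * (S ∩ Ico (n K) (n (K + 1))).ncard := by positivity
      linarith

/-- On a block outside `I` the count is frozen; on a block inside `I` the density increases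
towards the end of the block. -/
lemma ncard_blockUnion_inter_Iio_div_le (hn : StrictMono n) {K N : ℕ} (h₁ : n K ≤ N)
    (h₂ : N ≤ n (K + 1)) :
    ((blockUnion n I ∩ Iio N).ncard : ℝ) / N ≤ (blockUnion n I ∩ Iio (n K)).ncard / n K
      + (blockUnion n I ∩ Iio (n (K + 1))).ncard / n (K + 1) := by
  have hc := ncard_inter_Iio_le (blockUnion n I) (n K)
  have hK₁ : n K ≤ n (K + 1) := hn.monotone (by omega)
  set c := (blockUnion n I ∩ Iio (n K)).ncard with hcdef
  have hc₀ : (0 : ℝ) ≤ c / n K := by positivity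
  by_cases hK : K ∈ I
  · rw [ncard_blockUnion_inter_Iio_of_mem hn hK h₁ h₂,
      ncard_blockUnion_inter_Iio_of_mem hn hK hK₁ le_rfl, ← hcdef]
    have hmono := add_div_add_le_add_div_add (Nat.cast_nonneg c) (Nat.cast_le.2 hc)
      (sub_nonneg.2 (Nat.cast_le.2 h₁)) (sub_le_sub_right (Nat.cast_le.2 h₂) (n K : ℝ))
    rw [add_sub_cancel, add_sub_cancel] at hmono
    push_cast [Nat.cast_sub h₁, Nat.cast_sub hK₁]
    linarith
  · rw [ncard_blockUnion_inter_Iio_of_notMem hn hK h₁ h₂, ← hcdef]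
    have : (0 : ℝ) ≤ (blockUnion n I ∩ Iio (n (K + 1))).ncard / n (K + 1) := by positivity
    rcases Nat.eq_zero_or_pos (n K) with h₀ | h₀
    · simp only [show c = 0 by omega, Nat.cast_zero, zero_div, zero_add]
      exact this
    · have := div_le_div_of_nonneg_left (Nat.cast_nonneg c) (Nat.cast_pos.2 h₀)
        (Nat.cast_le.2 h₁) (G₀ := ℝ)
      linarith

theorem hasDensity_blockUnion (hn : StrictMono n) {S : Set ℕ} (hS : HasDensity S 0) {C : ℝ}
    (hC : 0 ≤ C)
    (hSI : ∀ K ∈ I, ((n (K + 1) - n K : ℕ) : ℝ) ≤ C * (S ∩ Ico (n K) (n (K + 1))).ncard) :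
    HasDensity (blockUnion n I) 0 := by
  have hn' : Tendsto n atTop atTop := hn.tendsto_atTop
  have hend : Tendsto (fun K => ((blockUnion n I ∩ Iio (n K)).ncard : ℝ) / n K) atTop (𝓝 0) := by
    have hSn : Tendsto (fun K => C * (((S ∩ Iio (n K)).ncard : ℝ) / n K)) atTop (𝓝 0) := by
      simpa using (hS.comp hn').const_mul C
    refine squeeze_zero (fun K => by positivity) (fun K => ?_) hSn
    rw [mul_div_assoc']
    exact div_le_div_of_nonneg_right (ncard_blockUnion_inter_Iio_le hn hC hSI K)
      (Nat.cast_nonneg _)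
  refine tendsto_order.2 ⟨fun b hb => Eventually.of_forall fun N => hb.trans_le (by positivity),
    fun ε hε => ?_⟩
  obtain ⟨K₀, hK₀⟩ := eventually_atTop.1 (hend.eventually (gt_mem_nhds (half_pos hε)))
  filter_upwards [eventually_ge_atTop (n K₀)] with N hN
  obtain ⟨K, hK₁, hK₂⟩ := hn.exists_between_of_tendsto_atTop hn' (x := N + 1)
    (by have := hn.monotone K₀.zero_le; omega)
  have hKK₀ : K₀ ≤ K := by
    by_contra! h
    have := hn.monotone (show K + 1 ≤ K₀ by omega)
    omega
  have := ncard_blockUnion_inter_Iio_div_le (I := I) hn (by omega : n K ≤ N) (by omega)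
  linarith [hK₀ K hKK₀, hK₀ (K + 1) (by omega)]

end Density

lemma liftSet_eq_blockUnion (a : ℕ → ℕ) (A : Set ℕ) :
    liftSet a A = blockUnion (nseq a) {K | K + 1 ∈ A} := by
  ext m
  simp only [liftSet, blockUnion, mem_iUnion, mem_Icc, mem_Ico, mem_ofPred_eq, exists_prop]
  constructor
  · rintro ⟨k, hk, h₁, h₂⟩
    obtain ⟨K, rfl⟩ : ∃ K, k = K + 1 := Nat.exists_eq_succ_of_ne_zero fun h => by
      subst h
      have : nseq a 0 = 1 := rfl
      simp only [zero_tsub, this] at h₁ h₂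
      omega
    have := one_le_nseq (a := a) (K + 1)
    exact ⟨K, hk, h₁, by omega⟩
  · rintro ⟨K, hK, h₁, h₂⟩
    exact ⟨K + 1, hK, h₁, by omega⟩

lemma IsArithSeq.card_filter_le_ncard_inter_Ico {a : ℕ → ℕ} (ha : IsArithSeq a)
    (x : AddCircle (1 : ℝ)) (ε : ℝ) (K : ℕ) :
    ((Finset.Icc 2 (ratios a (K + 1))).filter fun r => ε ≤ ‖r • a K • x‖).card
      ≤ ({m | ε ≤ ‖(dSeq a m : ℤ) • x‖} ∩ Ico (nseq a K) (nseq a (K + 1))).ncard := by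
  rw [← Set.ncard_coe_finset]
  refine Set.ncard_le_ncard_of_injOn (fun r => nseq a K + r - 2) (fun r hr => ?_)
    (fun r₁ hr₁ r₂ hr₂ h => ?_) ((finite_Ico _ _).inter_of_right _)
  · simp only [Finset.coe_filter, Finset.mem_Icc, mem_ofPred_eq] at hr
    have := one_le_nseq (a := a) K
    have hK : nseq a (K + 1) = nseq a K + (ratios a (K + 1) - 1) := rfl
    refine ⟨?_, by omega, by omega⟩
    rw [mem_ofPred_eq, ha.dSeq_nseq_add (by omega) hr.1.2, natCast_zsmul, mul_nsmul']
    exact hr.2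
  · simp only [Finset.coe_filter, Finset.mem_Icc, mem_ofPred_eq] at hr₁ hr₂ h
    omega

theorem not_mem_statChar_of_cofinite_supp_general (a : ℕ → ℕ) (ha : IsArithSeq a) (c : ℕ → ℕ)
    (hcle : ∀ n, 1 ≤ n → c n ≤ ratios a n - 1)
    (x : AddCircle (1 : ℝ))
    (hx : x = ((∑' n : ℕ, (c n : ℝ) / (a n : ℝ) : ℝ) : AddCircle (1 : ℝ)))
    (hud : 0 < upperDensity (liftSet a ({n | c n ≠ 0} \ {n | c n = ratios a n - 1}))) :
    x ∉ statChar (fun n => (dSeq a n : ℤ)) := by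
  intro hmem
  have hS := hmem (1 / 16) (by norm_num)
  refine hud.ne' (Tendsto.limsup_eq ?_)
  rw [liftSet_eq_blockUnion]
  refine hasDensity_blockUnion ha.nseq_strictMono hS (by norm_num : (0 : ℝ) ≤ 16) fun K hK => ?_
  simp only [mem_ofPred_eq, Set.mem_sdiff] at hK
  have := hcle (K + 1) (by omega)
  have := ha.two_le_ratios K
  have hθ := inv_ratios_le_norm_nsmul ha hcle (K := K) (by omega) (by omega)
  rw [← hx] at hθ
  calc ((nseq a (K + 1) - nseq a K : ℕ) : ℝ) = ratios a (K + 1) - 1 := by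
        rw [show nseq a (K + 1) - nseq a K = ratios a (K + 1) - 1 from Nat.add_sub_cancel_left _ _,
          Nat.cast_sub (by omega), Nat.cast_one]
    _ ≤ 16 * ((Finset.Icc 2 (ratios a (K + 1))).filter fun r => 1 / 16 ≤ ‖r • a K • x‖).card :=
        AddCircle.sub_one_le_sixteen_mul_card_filter (by omega) hθ
    _ ≤ _ := by
        gcongr
        exact_mod_cast ha.card_filter_le_ncard_inter_Ico x (1 / 16) K

/-- if `supp x` is co-finite and `d̄(L(supp x \ supp_q x)) > 0`, then
`x ∉ t^s_{(d n)}(𝕋)`. Here `x` is given via its canonical digits `c`. -/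
theorem not_mem_statChar_of_cofinite_supp (a : ℕ → ℕ) (ha : IsArithSeq a) (c : ℕ → ℕ)
    (hc0 : c 0 = 0) (hcle : ∀ n, 1 ≤ n → c n ≤ ratios a n - 1)
    (hcanon : {n : ℕ | 1 ≤ n ∧ c n < ratios a n - 1}.Infinite)
    (x : AddCircle (1 : ℝ))
    (hx : x = ((∑' n : ℕ, (c n : ℝ) / (a n : ℝ) : ℝ) : AddCircle (1 : ℝ)))
    (hcof : {n : ℕ | 1 ≤ n ∧ c n = 0}.Finite)
    (hud : 0 < upperDensity (liftSet a ({n | c n ≠ 0} \ {n | c n = ratios a n - 1}))) :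
    x ∉ statChar (fun n => (dSeq a n : ℤ)) :=
  not_mem_statChar_of_cofinite_supp_general a ha c hcle x hx hud
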